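/- Fill–Fishkind formula in Hilbert space: let A, B ∈ L(H, K) have closed ranges, with R(A) ∩ R(B) = {0}, R(A*) ∩ R(B*) = {0}, R(A+B) = R(A) + R(B) and R(A*+B*) = R(A*) + R(B*). Then (A+B)^† = (I − S)A^†(I − T) + S B^† T, where S = (P_{N(B)^⊥} P_{N(A)})^† and T = (P_{N(A*)} P_{N(B*)^⊥})^†. -/

import Mathlib

/-!
Write `X` for the right-hand side and `W = R(A)ᗮ ⊓ R(B)ᗮ`; all ranges involved are closed because
`A` and `B` have bounded Moore–Penrose inverses `pA`, `pB`. Since `R(A) ∩ R(B) = 0`, the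
Moore–Penrose inverse `T` of `P_{R(A)ᗮ} P_{R(B)}` vanishes on `R(A)` and on `W` and fixes `R(B)`.
Likewise `S*`, the Moore–Penrose inverse of `P_{R(A*)ᗮ} P_{R(B*)}`, vanishes on `R(A*)` and fixes
`R(B*)`, so `A S = 0` and `B S = B`. Hence `(A + B) X = A pA (1 - T) + B pB T`, which fixes `R(A)`
and `R(B)` and kills `W`: it is the orthogonal projection `1 - P_W`, and the first three Penrose
equations follow. The same argument for `A*, B*`, where `S*` and `T*` exchange roles and `X*`
replaces `X`, shows that `(X (A + B))*` is selfadjoint.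
-/
open ContinuousLinearMap

/-- `P` is the orthogonal projection onto the closed subspace `S`: a selfadjoint
idempotent with range `S`. -/
def IsOrthoProj {E : Type*} [NormedAddCommGroup E] [InnerProductSpace ℂ E] [CompleteSpace E]
    (P : E →L[ℂ] E) (S : Submodule ℂ E) : Prop :=
  IsIdempotentElem P ∧ IsSelfAdjoint P ∧ LinearMap.range (P : E →ₗ[ℂ] E) = S

/-- `X` is the Moore–Penrose inverse of `T`: the four Penrose equations hold. -/
def IsMoorePenrose {E F : Type*} [NormedAddCommGroup E] [InnerProductSpace ℂ E] [CompleteSpace E]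
    [NormedAddCommGroup F] [InnerProductSpace ℂ F] [CompleteSpace F]
    (T : E →L[ℂ] F) (X : F →L[ℂ] E) : Prop :=
  T ∘L X ∘L T = T ∧ X ∘L T ∘L X = X ∧
    IsSelfAdjoint (T ∘L X) ∧ IsSelfAdjoint (X ∘L T)

open Submodule
open scoped InnerProduct

section

variable {E F : Type*} [NormedAddCommGroup E] [InnerProductSpace ℂ E] [CompleteSpace E]
  [NormedAddCommGroup F] [InnerProductSpace ℂ F] [CompleteSpace F]

theorem IsOrthoProj.eq_starProjection {P : E →L[ℂ] E} {M : Submodule ℂ E}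
    [M.HasOrthogonalProjection] (h : IsOrthoProj P M) : P = M.starProjection :=
  (IsStarProjection.ext_iff ⟨h.1, h.2.1⟩ isStarProjection_starProjection).mpr
    (h.2.2.trans M.range_starProjection.symm)

theorem range_adjoint_le_orthogonal_ker (G : E →L[ℂ] F) : (G†).range ≤ G.kerᗮ :=
  G.orthogonal_ker ▸ le_topologicalClosure _

theorem adjoint_starProjection_comp_starProjection (U V : Submodule ℂ E)
    [U.HasOrthogonalProjection] [V.HasOrthogonalProjection] :
    (U.starProjection ∘L V.starProjection)† = V.starProjection ∘L U.starProjection := by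
  rw [adjoint_comp, (isSelfAdjoint_starProjection _).adjoint_eq,
    (isSelfAdjoint_starProjection _).adjoint_eq]

namespace IsMoorePenrose

variable {G : E →L[ℂ] F} {X : F →L[ℂ] E}

theorem adjoint (h : IsMoorePenrose G X) : IsMoorePenrose (G†) (X†) := by
  obtain ⟨h₁, h₂, h₃, h₄⟩ := h
  refine ⟨?_, ?_, ?_, ?_⟩
  · simpa only [adjoint_comp, comp_assoc] using congrArg ContinuousLinearMap.adjoint h₁
  · simpa only [adjoint_comp, comp_assoc] using congrArg ContinuousLinearMap.adjoint h₂
  · simpa only [star_eq_adjoint, adjoint_comp] using IsSelfAdjoint.star_iff.mpr h₄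
  · simpa only [star_eq_adjoint, adjoint_comp] using IsSelfAdjoint.star_iff.mpr h₃

theorem comp_eq_adjoint_comp (h : IsMoorePenrose G X) : X ∘L G = G† ∘L X† := by
  rw [← adjoint_comp, h.2.2.2.adjoint_eq]

theorem eq_comp_adjoint_comp (h : IsMoorePenrose G X) : X = X ∘L X† ∘L G† := by
  rw [← adjoint_comp, h.2.2.1.adjoint_eq, h.2.1]

theorem ker_adjoint_le_ker (h : IsMoorePenrose G X) : (G†).ker ≤ X.ker := by
  intro y hy
  rw [LinearMap.mem_ker, coe_coe] at hy ⊢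
  rw [h.eq_comp_adjoint_comp]
  simp [hy]

theorem apply_apply_of_mem_orthogonal_ker (h : IsMoorePenrose G X) {u : E}
    (hu : u ∈ G.kerᗮ) : X (G u) = u := by
  have hker : u - X (G u) ∈ G.ker := by
    have := congrArg (· u) h.1
    simp only [coe_comp, Function.comp_apply] at this
    simp [this]
  have hperp : u - X (G u) ∈ G.kerᗮ := by
    refine sub_mem hu (range_adjoint_le_orthogonal_ker G ⟨(X†) u, ?_⟩)
    simp [← comp_apply, ← h.comp_eq_adjoint_comp]
  have := G.ker.inf_orthogonal_eq_bot.le ⟨hker, hperp⟩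
  exact (sub_eq_zero.mp ((mem_bot ℂ).mp this)).symm

theorem orthogonal_ker_le_range_adjoint (h : IsMoorePenrose G X) : G.kerᗮ ≤ (G†).range :=
  fun u hu ↦ ⟨(X†) u,
    (congrArg (· u) h.comp_eq_adjoint_comp).symm.trans (h.apply_apply_of_mem_orthogonal_ker hu)⟩

theorem isClosed_range (h : IsMoorePenrose G X) : IsClosed (G.range : Set F) := by
  have : G.range = (1 - G ∘L X).ker := by
    ext y
    constructor
    · rintro ⟨x, rfl⟩
      simpa [sub_eq_zero] using (congrArg (· x) h.1).symm
    · intro hy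
      exact ⟨X y, (sub_eq_zero.mp hy).symm⟩
  exact this ▸ (1 - G ∘L X).isClosed_ker

theorem orthogonal_ker_eq_range_adjoint (h : IsMoorePenrose G X) : G.kerᗮ = (G†).range :=
  le_antisymm h.orthogonal_ker_le_range_adjoint (range_adjoint_le_orthogonal_ker G)

section ProductOfProjections

variable {U V : Submodule ℂ E} [U.HasOrthogonalProjection] [V.HasOrthogonalProjection]
  {T : E →L[ℂ] E}

theorem apply_eq_zero_of_mem_left (hT : IsMoorePenrose (Uᗮ.starProjection ∘L V.starProjection) T)
    {u : E} (hu : u ∈ U) : T u = 0 := by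
  apply hT.ker_adjoint_le_ker
  have : Uᗮ.starProjection u = 0 :=
    (starProjection_apply_eq_zero_iff _).mpr (le_orthogonal_orthogonal U hu)
  rw [LinearMap.mem_ker, coe_coe, adjoint_starProjection_comp_starProjection, comp_apply, this,
    map_zero]

theorem apply_eq_zero_of_mem_inf_orthogonal
    (hT : IsMoorePenrose (Uᗮ.starProjection ∘L V.starProjection) T)
    {w : E} (hw : w ∈ Uᗮ ⊓ Vᗮ) : T w = 0 := by
  apply hT.ker_adjoint_le_ker
  rw [LinearMap.mem_ker, coe_coe, adjoint_starProjection_comp_starProjection, comp_apply,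
    starProjection_eq_self_iff.mpr hw.1, (starProjection_apply_eq_zero_iff _).mpr hw.2]

theorem apply_eq_self_of_mem_right
    (hT : IsMoorePenrose (Uᗮ.starProjection ∘L V.starProjection) T)
    (hUV : U ⊓ V = ⊥) {v : E} (hv : v ∈ V) : T v = v := by
  have hker : (Uᗮ.starProjection ∘L V.starProjection).ker ≤ Vᗮ := by
    intro z hz
    have hU : V.starProjection z ∈ U := by
      rw [← U.orthogonal_orthogonal, ← starProjection_apply_eq_zero_iff]
      exact hz
    have : V.starProjection z ∈ U ⊓ V := ⟨hU, V.starProjection_apply_mem z⟩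
    rw [hUV, mem_bot] at this
    exact (starProjection_apply_eq_zero_iff _).mp this
  have hfix := hT.apply_apply_of_mem_orthogonal_ker
    (orthogonal_le hker (le_orthogonal_orthogonal V hv))
  rw [comp_apply, starProjection_eq_self_iff.mpr hv] at hfix
  have hrest : v - Uᗮ.starProjection v ∈ U := by
    rw [starProjection_orthogonal_val, sub_sub_cancel]
    exact U.starProjection_apply_mem v
  calc T v = T (Uᗮ.starProjection v) + T (v - Uᗮ.starProjection v) := by
        rw [← map_add, add_sub_cancel]
    _ = v := by rw [hfix, hT.apply_eq_zero_of_mem_left hrest, add_zero]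

end ProductOfProjections

end IsMoorePenrose

/-- `T` is the oblique projection onto `R(B)` along `R(A) + (R(A)ᗮ ⊓ R(B)ᗮ)`. -/
def IsObliqueProj (A B : E →L[ℂ] F) (T : F →L[ℂ] F) : Prop :=
  T ∘L A = 0 ∧ T ∘L B = B ∧ ∀ w ∈ A.rangeᗮ ⊓ B.rangeᗮ, T w = 0

theorem IsMoorePenrose.isObliqueProj {A B : E →L[ℂ] F} {pA pB : F →L[ℂ] E} {P Q T : F →L[ℂ] F}
    (hT : IsMoorePenrose (P ∘L Q) T) (hpA : IsMoorePenrose A pA) (hpB : IsMoorePenrose B pB)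
    (hAB : A.range ⊓ B.range = ⊥) (hP : IsOrthoProj P A.rangeᗮ) (hQ : IsOrthoProj Q B.range) :
    IsObliqueProj A B T := by
  have := hpA.isClosed_range.completeSpace_coe
  have := hpB.isClosed_range.completeSpace_coe
  rw [hP.eq_starProjection, hQ.eq_starProjection] at hT
  refine ⟨?_, ?_, fun w hw ↦ hT.apply_eq_zero_of_mem_inf_orthogonal hw⟩ <;> ext x
  · exact hT.apply_eq_zero_of_mem_left ⟨x, rfl⟩
  · exact hT.apply_eq_self_of_mem_right hAB ⟨x, rfl⟩

theorem eq_one_sub_starProjection_orthogonal_sup {U V : Submodule ℂ E} {R : E →L[ℂ] E}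
    (hU : ∀ u ∈ U, R u = u) (hV : ∀ v ∈ V, R v = v) (hW : ∀ w ∈ (U ⊔ V)ᗮ, R w = 0) :
    R = 1 - (U ⊔ V)ᗮ.starProjection := by
  set W := (U ⊔ V)ᗮ
  have hfix : Wᗮ ≤ (R - 1).ker := by
    rw [orthogonal_orthogonal_eq_closure]
    refine topologicalClosure_minimal _ (sup_le ?_ ?_) (R - 1).isClosed_ker <;>
      intro u hu <;> simp [hU, hV, hu]
  ext x
  have h1 : R (W.starProjection x) = 0 := hW _ (W.starProjection_apply_mem x)
  have h2 : R (x - W.starProjection x) = x - W.starProjection x :=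
    sub_eq_zero.mp (hfix (W.sub_starProjection_mem_orthogonal x))
  calc R x = R (W.starProjection x) + R (x - W.starProjection x) := by
        rw [← map_add, add_sub_cancel]
    _ = (1 - W.starProjection) x := by rw [h1, h2, zero_add]; rfl

def fillFishkind (S : E →L[ℂ] E) (T : F →L[ℂ] F) (pA pB : F →L[ℂ] E) : F →L[ℂ] E :=
  (1 - S) ∘L pA ∘L (1 - T) + S ∘L pB ∘L T

theorem adjoint_fillFishkind (S : E →L[ℂ] E) (T : F →L[ℂ] F) (pA pB : F →L[ℂ] E) :
    (fillFishkind S T pA pB)† = fillFishkind (T†) (S†) (pA†) (pB†) := by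
  simp only [fillFishkind, map_add, map_sub, adjoint_comp, adjoint_one, comp_assoc, add_comm]

section FillFishkind

variable {A B : E →L[ℂ] F} {pA pB : F →L[ℂ] E} {S : E →L[ℂ] E} {T : F →L[ℂ] F}

theorem add_comp_fillFishkind (hpA : IsMoorePenrose A pA) (hpB : IsMoorePenrose B pB)
    (hAS : A ∘L S = 0) (hBS : B ∘L S = B) (hT : IsObliqueProj A B T) :
    (A + B) ∘L fillFishkind S T pA pB = 1 - (A.range ⊔ B.range)ᗮ.starProjection := by
  have hS₀ : (A + B) ∘L (1 - S) = A := by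
    rw [comp_sub, one_def, comp_id, add_comp, hAS, hBS, zero_add, add_sub_cancel_right]
  have hS₁ : (A + B) ∘L S = B := by rw [add_comp, hAS, hBS, zero_add]
  have hX : ∀ y, ((A + B) ∘L fillFishkind S T pA pB) y = A (pA (y - T y)) + B (pB (T y)) := by
    intro y
    simp only [fillFishkind, comp_add, ← comp_assoc, hS₀, hS₁]
    simp
  apply eq_one_sub_starProjection_orthogonal_sup
  · rintro _ ⟨x, rfl⟩
    have hTAx : T (A x) = 0 := by simpa using congrArg (· x) hT.1
    rw [hX]
    simpa [hTAx] using congrArg (· x) hpA.1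
  · rintro _ ⟨x, rfl⟩
    have hTBx : T (B x) = B x := by simpa using congrArg (· x) hT.2.1
    rw [hX]
    simpa [hTBx] using congrArg (· x) hpB.1
  · intro w hw
    rw [← inf_orthogonal] at hw
    have hpAw : pA w = 0 := hpA.ker_adjoint_le_ker (A.orthogonal_range ▸ hw.1)
    rw [hX, hT.2.2 w hw, sub_zero, hpAw]
    simp

theorem penrose_fillFishkind (hpA : IsMoorePenrose A pA) (hpB : IsMoorePenrose B pB)
    (hAS : A ∘L S = 0) (hBS : B ∘L S = B) (hT : IsObliqueProj A B T) :
    (A + B) ∘L fillFishkind S T pA pB ∘L (A + B) = A + B ∧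
      fillFishkind S T pA pB ∘L (A + B) ∘L fillFishkind S T pA pB = fillFishkind S T pA pB ∧
      IsSelfAdjoint ((A + B) ∘L fillFishkind S T pA pB) := by
  set W := (A.range ⊔ B.range)ᗮ
  have hMX := add_comp_fillFishkind hpA hpB hAS hBS hT
  have hWM : W.starProjection ∘L (A + B) = 0 := by
    ext x
    refine (starProjection_apply_eq_zero_iff W).mpr (le_orthogonal_orthogonal _ ?_)
    exact add_mem (mem_sup_left ⟨x, rfl⟩) (mem_sup_right ⟨x, rfl⟩)
  have hXW : fillFishkind S T pA pB ∘L W.starProjection = 0 := by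
    ext x
    have hw : W.starProjection x ∈ A.rangeᗮ ⊓ B.rangeᗮ := by
      rw [inf_orthogonal]; exact W.starProjection_apply_mem x
    have hpAw : pA (W.starProjection x) = 0 := hpA.ker_adjoint_le_ker (A.orthogonal_range ▸ hw.1)
    simp [fillFishkind, hT.2.2 _ hw, hpAw]
  refine ⟨?_, ?_, ?_⟩
  · rw [← comp_assoc, hMX, sub_comp, one_def, id_comp, hWM, sub_zero]
  · rw [hMX, comp_sub, one_def, comp_id, hXW, sub_zero]
  · rw [hMX]
    exact isStarProjection_starProjection.one_sub.isSelfAdjoint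

theorem isMoorePenrose_fillFishkind (hpA : IsMoorePenrose A pA) (hpB : IsMoorePenrose B pB)
    (hS : IsObliqueProj (A†) (B†) (S†)) (hT : IsObliqueProj A B T) :
    IsMoorePenrose (A + B) (fillFishkind S T pA pB) := by
  have hAS : A ∘L S = 0 := by
    simpa [adjoint_comp] using congrArg ContinuousLinearMap.adjoint hS.1
  have hBS : B ∘L S = B := by
    simpa [adjoint_comp] using congrArg ContinuousLinearMap.adjoint hS.2.1
  have hTA : A† ∘L T† = 0 := by
    simpa [adjoint_comp] using congrArg ContinuousLinearMap.adjoint hT.1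
  have hTB : B† ∘L T† = B† := by
    simpa [adjoint_comp] using congrArg ContinuousLinearMap.adjoint hT.2.1
  obtain ⟨h₁, h₂, h₃⟩ := penrose_fillFishkind hpA hpB hAS hBS hT
  have h₄ := (penrose_fillFishkind hpA.adjoint hpB.adjoint hTA hTB hS).2.2
  rw [← map_add, ← adjoint_fillFishkind, ← adjoint_comp, ← star_eq_adjoint] at h₄
  exact ⟨h₁, h₂, h₃, IsSelfAdjoint.star_iff.mp h₄⟩

end FillFishkind

end

variable {H K : Type*} [NormedAddCommGroup H] [InnerProductSpace ℂ H] [CompleteSpace H]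
  [NormedAddCommGroup K] [InnerProductSpace ℂ K] [CompleteSpace K]

theorem fill_fishkind (A B : H →L[ℂ] K)
    (h1 : LinearMap.range (A : H →ₗ[ℂ] K) ⊓ LinearMap.range (B : H →ₗ[ℂ] K) = ⊥)
    (h2 : LinearMap.range (adjoint A : K →ₗ[ℂ] H) ⊓ LinearMap.range (adjoint B : K →ₗ[ℂ] H) = ⊥)
    (PNA PNB' : H →L[ℂ] H)
    (hPNA : IsOrthoProj PNA (LinearMap.ker (A : H →ₗ[ℂ] K)))
    (hPNB' : IsOrthoProj PNB' (LinearMap.ker (B : H →ₗ[ℂ] K))ᗮ)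
    (PNAs PNBs' : K →L[ℂ] K)
    (hPNAs : IsOrthoProj PNAs (LinearMap.ker (adjoint A : K →ₗ[ℂ] H)))
    (hPNBs' : IsOrthoProj PNBs' (LinearMap.ker (adjoint B : K →ₗ[ℂ] H))ᗮ)
    (S : H →L[ℂ] H) (hS : IsMoorePenrose (PNB' ∘L PNA) S)
    (T : K →L[ℂ] K) (hT : IsMoorePenrose (PNAs ∘L PNBs') T)
    (pA : K →L[ℂ] H) (hpA : IsMoorePenrose A pA)
    (pB : K →L[ℂ] H) (hpB : IsMoorePenrose B pB) :
    IsMoorePenrose (A + B) ((1 - S) ∘L pA ∘L (1 - T) + S ∘L pB ∘L T) := by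
  have hS' : IsMoorePenrose (PNA ∘L PNB') (S†) := by
    simpa only [adjoint_comp, hPNA.2.1.adjoint_eq, hPNB'.2.1.adjoint_eq] using hS.adjoint
  refine isMoorePenrose_fillFishkind hpA hpB ?_ ?_
  · refine hS'.isObliqueProj hpA.adjoint hpB.adjoint h2 ?_ ?_
    · rwa [orthogonal_range, adjoint_adjoint]
    · rwa [← hpB.orthogonal_ker_eq_range_adjoint]
  · refine hT.isObliqueProj hpA hpB h1 ?_ ?_
    · rwa [orthogonal_range]
    · rwa [← adjoint_adjoint B, ← hpB.adjoint.orthogonal_ker_eq_range_adjoint]
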